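/- arXiv:1908.03490 — 7 statements merged into one kernel-verified Lean document; each statement's English description precedes it below -/
import Mathlib

section
/- Let d ≥ 1 be an integer, let α, β ∈ ℝ satisfy α + β > d, and let λ ≥ 1. Then there exists a constant C > 0, depending only on d, α, β, λ, such that for every n ∈ ℤ^d one has ∑ ⟨n₁⟩^{−α} ⟨n − n₁⟩^{−β} ≤ C ⟨n⟩^{d − α − β}, where the sum ranges over all n₁ ∈ ℤ^d satisfying the comparability condition λ^{−1} |n − n₁| ≤ |n₁| ≤ λ |n − n₁|. (No upper restriction α, β < d is needed in this resonant case.) -/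
/-!
On the comparability region `⟨n₁⟩` and `⟨n - n₁⟩` agree up to the factor `λ`, so the summand is
at most `λ^|β| ⟨n₁⟩^{-(α+β)}`, while the triangle inequality gives `⟨n⟩ ≤ (1 + λ) ⟨n₁⟩`. The sum is
therefore dominated by a lattice tail `∑_{⟨n₁⟩ ≥ R} ⟨n₁⟩^{-s}` with `s = α + β > d` and
`R = ⟨n⟩ / (1 + λ)`. Grouping lattice points by their sup norm `m`, each shell has `O(m^{d-1})`
points, and the one-dimensional tail `∑_{m ≥ K} m^{d-1-s}` is `O(K^{d-s})` by comparison with an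
integral; hence the tail is `O(R^{d-s})`.
-/

/-- Japanese bracket `⟨n⟩ = (1 + |n|²)^{1/2}` for `n ∈ ℤ^d`. -/
noncomputable def jb (d : ℕ) (n : Fin d → ℤ) : ℝ :=
  Real.sqrt (1 + ∑ i, ((n i : ℝ)) ^ 2)

/-- Euclidean norm `|n|` for `n ∈ ℤ^d`. -/
noncomputable def znorm (d : ℕ) (n : Fin d → ℤ) : ℝ :=
  Real.sqrt (∑ i, ((n i : ℝ)) ^ 2)

open Finset

lemma sqrt_one_add_sq_le_mul {a b c : ℝ} (ha : 0 ≤ a) (hc : 1 ≤ c) (h : a ≤ c * b) :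
    √(1 + a ^ 2) ≤ c * √(1 + b ^ 2) := by
  rw [Real.sqrt_le_left (by positivity), mul_pow, Real.sq_sqrt (by positivity)]
  nlinarith [mul_le_mul h h ha (ha.trans h)]

lemma rpow_le_rpow_abs_mul_rpow {a b c : ℝ} (ha : 0 < a) (hb : 0 < b) (hab : a ≤ c * b)
    (hba : b ≤ c * a) (t : ℝ) : b ^ t ≤ c ^ |t| * a ^ t := by
  have hc : 0 < c := pos_of_mul_pos_left (hb.trans_le hba) ha.le
  rcases le_total 0 t with ht | ht
  · rw [abs_of_nonneg ht, ← Real.mul_rpow hc.le ha.le]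
    exact Real.rpow_le_rpow hb.le hba ht
  · rw [abs_of_nonpos ht, Real.rpow_neg hc.le, ← Real.inv_rpow hc.le,
      ← Real.mul_rpow (by positivity) ha.le]
    refine Real.rpow_le_rpow_of_nonpos (by positivity) ?_ ht
    rwa [inv_mul_le_iff₀ hc]

lemma sum_add_one_rpow_neg_le {u : ℝ} (hu : 1 < u) (K : ℕ) (G : Finset ℕ)
    (hG : ∀ m ∈ G, K ≤ m) :
    ∑ m ∈ G, ((m : ℝ) + 1) ^ (-u) ≤ u / (u - 1) * ((K : ℝ) + 1) ^ (1 - u) := by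
  set N := max (G.sup id) K + 1
  have hKN : K < N := by omega
  have hGN : G ⊆ Ico K N := fun m hm =>
    mem_Ico.2 ⟨hG m hm, Nat.lt_succ_of_le (le_max_of_le_left (le_sup (f := id) hm))⟩
  have hK : (0 : ℝ) < K + 1 := by positivity
  have hintegral :
      ∑ m ∈ Ico (K + 1) N, ((m : ℝ) + 1) ^ (-u) ≤ ((K : ℝ) + 1) ^ (1 - u) / (u - 1) := by
    have hanti : AntitoneOn (fun x : ℝ => x ^ (-u)) (Set.Icc ↑(K + 1) ↑N) :=
      (Real.antitoneOn_rpow_Ioi_of_exponent_nonpos (by linarith)).mono fun x hx =>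
        hK.trans_le (by exact_mod_cast hx.1)
    have hzero : (0 : ℝ) ∉ Set.uIcc ((K + 1 : ℕ) : ℝ) N := by
      rw [Set.uIcc_of_le (by exact_mod_cast hKN)]
      exact fun h => hK.not_ge (by exact_mod_cast h.1)
    have := hanti.sum_le_integral_Ico hKN
    rw [integral_rpow (Or.inr ⟨by linarith, hzero⟩)] at this
    push_cast at this
    refine this.trans ?_
    rw [show -u + 1 = 1 - u by ring, ← neg_div_neg_eq, neg_sub, neg_sub]
    gcongr
    exact sub_le_self _ (by positivity)
  calc ∑ m ∈ G, ((m : ℝ) + 1) ^ (-u) ≤ ∑ m ∈ Ico K N, ((m : ℝ) + 1) ^ (-u) :=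
        sum_le_sum_of_subset_of_nonneg hGN fun _ _ _ => by positivity
    _ = ((K : ℝ) + 1) ^ (-u) + ∑ m ∈ Ico (K + 1) N, ((m : ℝ) + 1) ^ (-u) :=
        sum_eq_sum_Ico_succ_bot hKN _
    _ ≤ ((K : ℝ) + 1) ^ (1 - u) + ((K : ℝ) + 1) ^ (1 - u) / (u - 1) := by
        gcongr
        · exact_mod_cast Nat.le_add_left 1 K
        · linarith
    _ = u / (u - 1) * ((K : ℝ) + 1) ^ (1 - u) := by
        have : u - 1 ≠ 0 := by linarith
        field_simp
        ring

lemma summable_and_tsum_le_of_sum_le {ι : Type*} {f : ι → ℝ} (hf : 0 ≤ f) {c : ℝ}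
    (h : ∀ s : Finset ι, ∑ i ∈ s, f i ≤ c) : Summable f ∧ ∑' i, f i ≤ c :=
  ⟨summable_of_sum_le hf h, (summable_of_sum_le hf h).tsum_le_of_sum_le h⟩

section SupNorm

variable {ι : Type*} [Fintype ι]

def supNorm (n : ι → ℤ) : ℕ := univ.sup fun i => (n i).natAbs

lemma natAbs_le_supNorm (n : ι → ℤ) (i : ι) : (n i).natAbs ≤ supNorm n :=
  le_sup (f := fun i => (n i).natAbs) (mem_univ i)

lemma supNorm_le_iff_mem_piFinset [DecidableEq ι] {n : ι → ℤ} {m : ℕ} :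
    supNorm n ≤ m ↔ n ∈ Fintype.piFinset fun _ => Icc (-(m : ℤ)) m := by
  simp only [supNorm, Finset.sup_le_iff, mem_univ, true_implies, Fintype.mem_piFinset, mem_Icc]
  exact forall_congr' fun i => by omega

lemma card_filter_supNorm_eq_le [DecidableEq ι] [Nonempty ι] (F : Finset (ι → ℤ)) (m : ℕ) :
    #(F.filter fun n => supNorm n = m) ≤
      Fintype.card ι * 2 ^ Fintype.card ι * (m + 1) ^ (Fintype.card ι - 1) := by
  set D := Fintype.card ι
  have hD : 1 ≤ D := Fintype.card_pos
  let ball (k : ℕ) : Finset (ι → ℤ) := Fintype.piFinset fun _ => Icc (-(k : ℤ)) k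
  have card_ball (k : ℕ) : #(ball k) = (2 * k + 1) ^ D := by
    simp only [ball, Fintype.card_piFinset, Int.card_Icc, prod_const, card_univ]
    congr 1
    omega
  cases m with
  | zero =>
    calc #(F.filter fun n => supNorm n = 0) ≤ #(ball 0) :=
          card_le_card fun n hn => supNorm_le_iff_mem_piFinset.1 (mem_filter.1 hn).2.le
      _ = 1 := by simp [card_ball]
      _ ≤ D * 2 ^ D * (0 + 1) ^ (D - 1) := by
        simpa using Nat.mul_le_mul hD (Nat.one_le_two_pow (n := D))
  | succ k =>
    have hsub : (F.filter fun n => supNorm n = k + 1) ⊆ ball (k + 1) \ ball k := fun n hn => by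
      rw [mem_sdiff, ← supNorm_le_iff_mem_piFinset, ← supNorm_le_iff_mem_piFinset,
        (mem_filter.1 hn).2]
      omega
    have hball : ball k ⊆ ball (k + 1) := fun n hn => by
      rw [← supNorm_le_iff_mem_piFinset] at hn ⊢
      omega
    have hdiff : ((2 * k + 3) ^ D : ℤ) - (2 * k + 1) ^ D ≤ 2 * D * (2 * k + 3) ^ (D - 1) := by
      have := abs_pow_sub_pow_le (2 * k + 3 : ℤ) (2 * k + 1) D
      grind
    calc #(F.filter fun n => supNorm n = k + 1) ≤ #(ball (k + 1) \ ball k) := card_le_card hsub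
      _ = (2 * k + 3) ^ D - (2 * k + 1) ^ D := by
        rw [card_sdiff_of_subset hball, card_ball, card_ball]
        ring_nf
      _ ≤ 2 * D * (2 * k + 3) ^ (D - 1) := by
        have := Nat.pow_le_pow_left (show 2 * k + 1 ≤ 2 * k + 3 by omega) D
        zify [this]
        exact hdiff
      _ ≤ 2 * D * (2 * (k + 1 + 1)) ^ (D - 1) := by gcongr; omega
      _ = D * 2 ^ D * (k + 1 + 1) ^ (D - 1) := by
        rw [mul_pow, ← mul_assoc, mul_comm 2 D, mul_assoc D 2, ← pow_succ', Nat.sub_add_cancel hD]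

end SupNorm

section JapaneseBracket

variable {d : ℕ}

lemma one_le_jb (n : Fin d → ℤ) : 1 ≤ jb d n :=
  Real.one_le_sqrt.2 (le_add_of_nonneg_right (by positivity))

lemma jb_pos (n : Fin d → ℤ) : 0 < jb d n :=
  one_pos.trans_le (one_le_jb n)

lemma znorm_eq_norm (n : Fin d → ℤ) :
    znorm d n = ‖WithLp.toLp 2 (fun i => (n i : ℝ))‖ := by
  simp [znorm, EuclideanSpace.norm_eq]

lemma jb_eq_sqrt_one_add_znorm_sq (n : Fin d → ℤ) :
    jb d n = √(1 + znorm d n ^ 2) := by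
  rw [jb, znorm, Real.sq_sqrt (by positivity)]

lemma znorm_le_add_znorm_sub (n m : Fin d → ℤ) :
    znorm d n ≤ znorm d m + znorm d (n - m) := by
  have hsplit : (WithLp.toLp 2 fun i => (n i : ℝ)) =
      (WithLp.toLp 2 fun i => (m i : ℝ)) + WithLp.toLp 2 fun i => ((n - m) i : ℝ) := by
    rw [← WithLp.toLp_add]
    congr 1
    ext i
    simp
  simpa only [znorm_eq_norm, hsplit] using norm_add_le _ _

lemma jb_le_mul_jb_of_znorm_le_mul {c : ℝ} (hc : 1 ≤ c) (h : znorm d n ≤ c * znorm d m) :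
    jb d n ≤ c * jb d m := by
  rw [jb_eq_sqrt_one_add_znorm_sq, jb_eq_sqrt_one_add_znorm_sq]
  exact sqrt_one_add_sq_le_mul (Real.sqrt_nonneg _) hc h

end JapaneseBracket

section LatticeTail

variable {d : ℕ}

lemma supNorm_le_jb (n : Fin d → ℤ) : (supNorm n : ℝ) ≤ jb d n := by
  refine le_trans (Nat.cast_le.2 (Finset.sup_le fun i _ => Nat.le_floor ?_))
    (Nat.floor_le (jb_pos n).le)
  rw [Nat.cast_natAbs, Int.cast_abs]
  exact Real.abs_le_sqrt (le_add_of_nonneg_of_le zero_le_one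
    (single_le_sum (f := fun i => ((n i : ℝ)) ^ 2) (fun i _ => sq_nonneg _) (mem_univ i)))

lemma jb_le_sqrt_mul_supNorm_add_one (n : Fin d → ℤ) :
    jb d n ≤ √(d + 1) * (supNorm n + 1) := by
  have hsum : ∑ i, ((n i : ℝ)) ^ 2 ≤ d * (supNorm n : ℝ) ^ 2 := by
    simpa using sum_le_card_nsmul univ (fun i => ((n i : ℝ)) ^ 2) ((supNorm n : ℝ) ^ 2)
      fun i _ => by
        rw [← sq_abs, ← Int.cast_abs, ← Nat.cast_natAbs]
        exact pow_le_pow_left₀ (by positivity) (by exact_mod_cast natAbs_le_supNorm n i) 2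
  rw [jb, ← Real.sqrt_sq (by positivity : (0 : ℝ) ≤ supNorm n + 1),
    ← Real.sqrt_mul (by positivity)]
  exact Real.sqrt_le_sqrt (by nlinarith [(supNorm n).cast_nonneg (α := ℝ)])

lemma jb_rpow_neg_le_supNorm {s : ℝ} (hs : 0 ≤ s) (n : Fin d → ℤ) :
    jb d n ^ (-s) ≤ 2 ^ s * ((supNorm n : ℝ) + 1) ^ (-s) := by
  have hM : ((supNorm n : ℝ) + 1) / 2 ≤ jb d n := by
    linarith [one_le_jb n, supNorm_le_jb n]
  calc jb d n ^ (-s) ≤ (((supNorm n : ℝ) + 1) / 2) ^ (-s) :=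
        Real.rpow_le_rpow_of_nonpos (by positivity) hM (neg_nonpos.2 hs)
    _ = 2 ^ s * ((supNorm n : ℝ) + 1) ^ (-s) := by
        rw [Real.div_rpow (by positivity) zero_le_two, Real.rpow_neg zero_le_two, div_inv_eq_mul,
          mul_comm]

lemma sum_jb_rpow_neg_le_of_le_supNorm (hd : 1 ≤ d) {s : ℝ} (hs : (d : ℝ) < s) (K : ℕ)
    (F : Finset (Fin d → ℤ)) (hF : ∀ n ∈ F, K ≤ supNorm n) :
    ∑ n ∈ F, jb d n ^ (-s) ≤
      2 ^ s * (d * 2 ^ d) * ((s - d + 1) / (s - d)) * ((K : ℝ) + 1) ^ ((d : ℝ) - s) := by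
  have : Nonempty (Fin d) := ⟨⟨0, hd⟩⟩
  have hs0 : 0 ≤ s := d.cast_nonneg.trans hs.le
  have hfiber (m : ℕ) : #(F.filter fun n => supNorm n = m) * ((m : ℝ) + 1) ^ (-s) ≤
      ((d * 2 ^ d : ℕ) : ℝ) * ((m : ℝ) + 1) ^ (-(s - d + 1)) := by
    have hcard : (#(F.filter fun n => supNorm n = m) : ℝ) ≤
        ((d * 2 ^ d : ℕ) : ℝ) * ((m : ℝ) + 1) ^ (d - 1) := by
      exact_mod_cast Fintype.card_fin d ▸ card_filter_supNorm_eq_le F m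
    calc #(F.filter fun n => supNorm n = m) * ((m : ℝ) + 1) ^ (-s)
        ≤ ((d * 2 ^ d : ℕ) : ℝ) * ((m : ℝ) + 1) ^ (d - 1) * ((m : ℝ) + 1) ^ (-s) := by gcongr
      _ = ((d * 2 ^ d : ℕ) : ℝ) * ((m : ℝ) + 1) ^ (-(s - d + 1)) := by
        rw [mul_assoc, ← Real.rpow_natCast ((m : ℝ) + 1) (d - 1), ← Real.rpow_add (by positivity),
          Nat.cast_sub hd]
        ring_nf
  calc ∑ n ∈ F, jb d n ^ (-s) ≤ ∑ n ∈ F, 2 ^ s * ((supNorm n : ℝ) + 1) ^ (-s) :=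
        sum_le_sum fun n _ => jb_rpow_neg_le_supNorm hs0 n
    _ = 2 ^ s * ∑ m ∈ F.image supNorm,
          #(F.filter fun n => supNorm n = m) * ((m : ℝ) + 1) ^ (-s) := by
        rw [← mul_sum, sum_comp (fun m : ℕ => ((m : ℝ) + 1) ^ (-s))]
        simp_rw [nsmul_eq_mul]
    _ ≤ 2 ^ s * ∑ m ∈ F.image supNorm, ((d * 2 ^ d : ℕ) : ℝ) * ((m : ℝ) + 1) ^ (-(s - d + 1)) :=
        mul_le_mul_of_nonneg_left (sum_le_sum fun m _ => hfiber m) (by positivity)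
    _ ≤ 2 ^ s * (((d * 2 ^ d : ℕ) : ℝ) *
          ((s - d + 1) / (s - d + 1 - 1) * ((K : ℝ) + 1) ^ (1 - (s - d + 1)))) := by
        rw [← mul_sum]
        gcongr
        refine sum_add_one_rpow_neg_le (by linarith) K _ ?_
        simpa using hF
    _ = _ := by push_cast; ring_nf

lemma exists_sum_jb_rpow_neg_le (hd : 1 ≤ d) {s : ℝ} (hs : (d : ℝ) < s) :
    ∃ C > 0, ∀ R > 0, ∀ F : Finset (Fin d → ℤ), (∀ n ∈ F, R ≤ jb d n) →
      ∑ n ∈ F, jb d n ^ (-s) ≤ C * R ^ ((d : ℝ) - s) := by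
  set C₀ := 2 ^ s * (d * 2 ^ d) * ((s - d + 1) / (s - d))
  have hsd : 0 < s - d := sub_pos.2 hs
  have hd₁ : 0 < √((d : ℝ) + 1) := by positivity
  refine ⟨C₀ * √((d : ℝ) + 1) ^ (s - d), by positivity, fun R hR F hF => ?_⟩
  set x := R / √((d : ℝ) + 1)
  have hx : 0 < x := by positivity
  set K := ⌈x⌉₊ - 1
  have hKx : x ≤ (K : ℝ) + 1 := by
    have := Nat.ceil_pos.2 hx
    rw [show (K : ℝ) + 1 = ⌈x⌉₊ by norm_cast; omega]
    exact Nat.le_ceil x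
  have hK : ∀ n ∈ F, K ≤ supNorm n := fun n hn => by
    have : x ≤ (supNorm n : ℝ) + 1 := by
      rw [div_le_iff₀ hd₁, mul_comm]
      exact (hF n hn).trans (jb_le_sqrt_mul_supNorm_add_one n)
    have := Nat.ceil_le.2 (show x ≤ ((supNorm n + 1 : ℕ) : ℝ) by exact_mod_cast this)
    omega
  calc ∑ n ∈ F, jb d n ^ (-s) ≤ C₀ * ((K : ℝ) + 1) ^ ((d : ℝ) - s) :=
        sum_jb_rpow_neg_le_of_le_supNorm hd hs K F hK
    _ ≤ C₀ * x ^ ((d : ℝ) - s) :=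
        mul_le_mul_of_nonneg_left (Real.rpow_le_rpow_of_nonpos hx hKx (sub_nonpos.2 hs.le))
          (by positivity)
    _ = C₀ * √((d : ℝ) + 1) ^ (s - d) * R ^ ((d : ℝ) - s) := by
        rw [Real.div_rpow hR.le hd₁.le, div_eq_mul_inv, ← Real.rpow_neg hd₁.le, neg_sub]
        ring

end LatticeTail

section Resonant

variable {d : ℕ} {lam : ℝ} {n m : Fin d → ℤ}

lemma jb_le_one_add_mul_jb_of_resonant (hlam : 1 ≤ lam)
    (h : lam⁻¹ * znorm d (n - m) ≤ znorm d m) : jb d n ≤ (1 + lam) * jb d m := by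
  refine jb_le_mul_jb_of_znorm_le_mul (by linarith) ?_
  have := (inv_mul_le_iff₀ (by linarith)).1 h
  linarith [znorm_le_add_znorm_sub n m]

lemma jb_rpow_mul_jb_sub_rpow_le_of_resonant (hlam : 1 ≤ lam)
    (h₁ : lam⁻¹ * znorm d (n - m) ≤ znorm d m) (h₂ : znorm d m ≤ lam * znorm d (n - m))
    (α β : ℝ) :
    jb d m ^ (-α) * jb d (n - m) ^ (-β) ≤ lam ^ |β| * jb d m ^ (-(α + β)) := by
  have hcomp := rpow_le_rpow_abs_mul_rpow (jb_pos m) (jb_pos (n - m))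
    (jb_le_mul_jb_of_znorm_le_mul hlam h₂)
    (jb_le_mul_jb_of_znorm_le_mul hlam ((inv_mul_le_iff₀ (by linarith)).1 h₁)) (-β)
  rw [abs_neg] at hcomp
  calc jb d m ^ (-α) * jb d (n - m) ^ (-β) ≤ jb d m ^ (-α) * (lam ^ |β| * jb d m ^ (-β)) :=
        mul_le_mul_of_nonneg_left hcomp (Real.rpow_nonneg (jb_pos m).le _)
    _ = lam ^ |β| * jb d m ^ (-(α + β)) := by
        rw [neg_add, Real.rpow_add (jb_pos m)]
        ring

lemma exists_sum_resonant_le (hd : 1 ≤ d) {α β : ℝ} (hαβ : (d : ℝ) < α + β) (hlam : 1 ≤ lam) :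
    ∃ C > 0, ∀ (n : Fin d → ℤ) (F : Finset (Fin d → ℤ)),
      (∀ m ∈ F, lam⁻¹ * znorm d (n - m) ≤ znorm d m ∧ znorm d m ≤ lam * znorm d (n - m)) →
      ∑ m ∈ F, jb d m ^ (-α) * jb d (n - m) ^ (-β) ≤ C * jb d n ^ ((d : ℝ) - α - β) := by
  obtain ⟨C, hC, htail⟩ := exists_sum_jb_rpow_neg_le hd hαβ
  have hlam₀ : 0 < lam := by linarith
  have hlam₁ : 0 < 1 + lam := by linarith
  refine ⟨lam ^ |β| * C * (1 + lam) ^ (α + β - d), by positivity, fun n F hF => ?_⟩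
  calc ∑ m ∈ F, jb d m ^ (-α) * jb d (n - m) ^ (-β)
      ≤ ∑ m ∈ F, lam ^ |β| * jb d m ^ (-(α + β)) := sum_le_sum fun m hm =>
        jb_rpow_mul_jb_sub_rpow_le_of_resonant hlam (hF m hm).1 (hF m hm).2 α β
    _ = lam ^ |β| * ∑ m ∈ F, jb d m ^ (-(α + β)) := (mul_sum ..).symm
    _ ≤ lam ^ |β| * (C * (jb d n / (1 + lam)) ^ ((d : ℝ) - (α + β))) := by
        refine mul_le_mul_of_nonneg_left (htail _ (div_pos (jb_pos n) hlam₁) _ fun m hm => ?_)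
          (by positivity)
        rw [div_le_iff₀ hlam₁, mul_comm]
        exact jb_le_one_add_mul_jb_of_resonant hlam (hF m hm).1
    _ = lam ^ |β| * C * (1 + lam) ^ (α + β - d) * jb d n ^ ((d : ℝ) - α - β) := by
        rw [Real.div_rpow (jb_pos n).le hlam₁.le, div_eq_mul_inv, ← Real.rpow_neg hlam₁.le]
        ring_nf

end Resonant

/-- Lemma 2.3(ii): discrete convolution estimate, resonant case. -/
theorem stmt1 (d : ℕ) (hd : 1 ≤ d) (α β : ℝ) (hαβ : (d : ℝ) < α + β)
    (lam : ℝ) (hlam : 1 ≤ lam) :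
    ∃ C > 0, ∀ n : Fin d → ℤ,
      Summable (fun n₁ : {m : Fin d → ℤ //
          lam⁻¹ * znorm d (n - m) ≤ znorm d m ∧ znorm d m ≤ lam * znorm d (n - m)} =>
        jb d (n₁ : Fin d → ℤ) ^ (-α) * jb d (n - (n₁ : Fin d → ℤ)) ^ (-β)) ∧
      ∑' n₁ : {m : Fin d → ℤ //
          lam⁻¹ * znorm d (n - m) ≤ znorm d m ∧ znorm d m ≤ lam * znorm d (n - m)},
        jb d (n₁ : Fin d → ℤ) ^ (-α) * jb d (n - (n₁ : Fin d → ℤ)) ^ (-β)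
        ≤ C * jb d n ^ ((d : ℝ) - α - β) := by
  obtain ⟨C, hC, hsum⟩ := exists_sum_resonant_le hd hαβ hlam
  refine ⟨C, hC, fun n => summable_and_tsum_le_of_sum_le (fun m => ?_) (fun F => ?_)⟩
  · exact mul_nonneg (Real.rpow_nonneg (jb_pos _).le _) (Real.rpow_nonneg (jb_pos _).le _)
  · simpa only [sum_map, Function.Embedding.coe_subtype] using
      hsum n (F.map (Function.Embedding.subtype _)) fun m hm => by
        obtain ⟨m, -, rfl⟩ := mem_map.1 hm
        exact m.2
end

section
/- Let α ≥ 1/2 and fix n ∈ ℤ². Then the partial sums S_N := ∑_{k ∈ ℤ², |k| ≤ N} ⟨k⟩^{−2(1−α)} ⟨n − k⟩^{−2(1−α)} tend to +∞ as N → ∞. Moreover, there exists c > 0 (depending on n and α) such that for all sufficiently large N: S_N ≥ c log N if α = 1/2, and S_N ≥ c N^{4α − 2} if α > 1/2. (This is the deterministic divergence underlying the negative part of Proposition 1.4(i): the Wick square of the heat stochastic convolution fails to be a spatial distribution for α ≥ 1/2.) -/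
/-- Japanese bracket `⟨n⟩ = (1 + |n|²)^{1/2}` for `n ∈ ℤ²`. -/
noncomputable def jb2 (n : ℤ × ℤ) : ℝ :=
  Real.sqrt (1 + (n.1 : ℝ) ^ 2 + (n.2 : ℝ) ^ 2)

/-- Euclidean norm `|n|` for `n ∈ ℤ²`. -/
noncomputable def znorm2 (n : ℤ × ℤ) : ℝ :=
  Real.sqrt ((n.1 : ℝ) ^ 2 + (n.2 : ℝ) ^ 2)

lemma one_le_jb2 (k : ℤ × ℤ) : 1 ≤ jb2 k := by
  have h : Real.sqrt 1 ≤ jb2 k :=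
    Real.sqrt_le_sqrt (by nlinarith [sq_nonneg ((k.1:ℝ)), sq_nonneg ((k.2:ℝ))])
  simpa using h

lemma jb2_pos (k : ℤ × ℤ) : 0 < jb2 k := lt_of_lt_of_le one_pos (one_le_jb2 k)

lemma jb2_sub_le (a b : ℤ × ℤ) : jb2 (a - b) ≤ Real.sqrt 2 * jb2 a * jb2 b := by
  rw [jb2, jb2, jb2, ← Real.sqrt_mul (by norm_num), ← Real.sqrt_mul (by positivity)]
  apply Real.sqrt_le_sqrt
  simp only [Prod.fst_sub, Prod.snd_sub]
  push_cast
  nlinarith [sq_nonneg ((a.1:ℝ) + b.1), sq_nonneg ((a.2:ℝ) + b.2), sq_nonneg ((a.1:ℝ)*b.2), sq_nonneg ((a.2:ℝ)*b.1), sq_nonneg ((a.1:ℝ)*b.1), sq_nonneg ((a.2:ℝ)*b.2)]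

lemma rpow_bridge {A x j t : ℝ} (hA : 1 ≤ A) (hj : 0 < j)
    (h1 : j / A ≤ x) (h2 : x ≤ A * j) : A ^ (-|t|) * j ^ t ≤ x ^ t := by
  have hA0 : 0 < A := lt_of_lt_of_le one_pos hA
  have hx : 0 < x := lt_of_lt_of_le (by positivity) h1
  rcases le_or_gt 0 t with ht | ht
  · rw [abs_of_nonneg ht]
    calc A ^ (-t) * j ^ t = (j / A) ^ t := by
          rw [Real.div_rpow hj.le hA0.le, Real.rpow_neg hA0.le]; ring
      _ ≤ x ^ t := Real.rpow_le_rpow (by positivity) h1 ht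
  · rw [abs_of_neg ht, neg_neg]
    calc A ^ t * j ^ t = (A * j) ^ t := (Real.mul_rpow hA0.le hj.le).symm
      _ ≤ x ^ t := Real.rpow_le_rpow_of_nonpos hx h2 ht.le

lemma sum_rpow_ge {s : ℝ} (hs : -1 < s) {M : ℕ} (hM : 1 ≤ M) :
    ((M:ℝ)/2) ^ (1+s) ≤ ∑ j ∈ Finset.Icc 1 M, (j:ℝ) ^ s := by
  have hM0 : (0:ℝ) < M := by exact_mod_cast hM
  have hs1 : (0:ℝ) ≤ 1 + s := by linarith
  rcases le_or_gt 0 s with h0 | h0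
  · have hsub : Finset.Icc (M/2+1) M ⊆ Finset.Icc 1 M := Finset.Icc_subset_Icc (by omega) le_rfl
    have h1 : ∑ j ∈ Finset.Icc (M/2+1) M, (j:ℝ)^s ≤ ∑ j ∈ Finset.Icc 1 M, (j:ℝ)^s :=
      Finset.sum_le_sum_of_subset_of_nonneg hsub
        (fun i _ _ => Real.rpow_nonneg (by positivity) s)
    have hpt : ∀ j ∈ Finset.Icc (M/2+1) M, ((M:ℝ)/2)^s ≤ (j:ℝ)^s := by
      intro j hj
      have hj' := (Finset.mem_Icc.mp hj).1
      have hle : (M:ℝ)/2 ≤ (j:ℝ) := by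
        have h2j : M ≤ 2 * j := by omega
        have := (Nat.cast_le (α := ℝ)).2 h2j
        push_cast at this; linarith
      exact Real.rpow_le_rpow (by positivity) hle h0
    have hcard : (Finset.Icc (M/2+1) M).card = M - M/2 := by rw [Nat.card_Icc]; omega
    have h2 : ((M:ℝ)/2) * ((M:ℝ)/2)^s ≤ ∑ j ∈ Finset.Icc (M/2+1) M, (j:ℝ)^s := by
      calc ((M:ℝ)/2) * ((M:ℝ)/2)^s ≤ ((M - M/2 : ℕ):ℝ) * ((M:ℝ)/2)^s := by
            apply mul_le_mul_of_nonneg_right _ (Real.rpow_nonneg (by positivity) s)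
            have h2j : M ≤ 2 * (M - M/2) := by omega
            have := (Nat.cast_le (α := ℝ)).2 h2j; push_cast at this; linarith
        _ ≤ _ := by
            have := Finset.card_nsmul_le_sum (Finset.Icc (M/2+1) M)
              (fun j => (j:ℝ)^s) (((M:ℝ)/2)^s) hpt
            rwa [hcard, nsmul_eq_mul] at this
    calc ((M:ℝ)/2) ^ (1+s) = ((M:ℝ)/2) * ((M:ℝ)/2)^s := by
          rw [Real.rpow_add (by positivity), Real.rpow_one]
      _ ≤ _ := le_trans h2 h1
  · have hpt : ∀ j ∈ Finset.Icc 1 M, (M:ℝ)^s ≤ (j:ℝ)^s := by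
      intro j hj
      obtain ⟨hj1, hj2⟩ := Finset.mem_Icc.mp hj
      have : (0:ℝ) < j := by exact_mod_cast hj1
      exact Real.rpow_le_rpow_of_nonpos this (by exact_mod_cast hj2) h0.le
    have h2 := Finset.card_nsmul_le_sum (Finset.Icc 1 M) (fun j => (j:ℝ)^s) ((M:ℝ)^s) hpt
    rw [Nat.card_Icc, nsmul_eq_mul] at h2
    calc ((M:ℝ)/2) ^ (1+s) ≤ (M:ℝ) ^ (1+s) :=
          Real.rpow_le_rpow (by positivity) (by linarith) hs1
      _ = (M:ℝ) * (M:ℝ)^s := by rw [Real.rpow_add hM0, Real.rpow_one]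
      _ ≤ _ := by
          have : ((M + 1 - 1 : ℕ):ℝ) = (M:ℝ) := by push_cast [Nat.add_sub_cancel]; ring
          rw [← this]; exact h2

lemma log_le_sum_inv (M : ℕ) :
    Real.log (M + 1) ≤ ∑ j ∈ Finset.Icc 1 M, (j:ℝ) ^ (-1 : ℝ) := by
  have h := log_add_one_le_harmonic M
  have he : ∀ m : ℕ, ((harmonic m : ℚ) : ℝ) = ∑ j ∈ Finset.Icc 1 m, (j:ℝ) ^ (-1 : ℝ) := by
    intro m
    induction m with
    | zero => simp [harmonic]
    | succ m ih =>
      rw [harmonic_succ, Finset.sum_Icc_succ_top (by omega : 1 ≤ m + 1)]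
      push_cast
      rw [ih, Real.rpow_neg_one]
  rw [← he]
  push_cast at h ⊢
  exact h
lemma sheat_finite (N : ℕ) : {m : ℤ × ℤ | znorm2 m ≤ N}.Finite := by
  apply Set.Finite.subset ((Set.finite_Icc (-(N:ℤ)) N).prod (Set.finite_Icc (-(N:ℤ)) N))
  intro m hm
  simp only [Set.mem_setOf_eq, znorm2] at hm
  have hnn : (0:ℝ) ≤ (m.1:ℝ)^2 + (m.2:ℝ)^2 := by positivity
  have hsq := Real.sq_sqrt hnn
  have hN : (0:ℝ) ≤ (N:ℝ) := by positivity
  have h2 : (m.1:ℝ)^2 + (m.2:ℝ)^2 ≤ (N:ℝ)^2 := by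
    nlinarith [Real.sqrt_nonneg ((m.1:ℝ)^2 + (m.2:ℝ)^2)]
  have h1a : -(N:ℝ) ≤ (m.1:ℝ) ∧ (m.1:ℝ) ≤ (N:ℝ) := by constructor <;> nlinarith [sq_nonneg (m.2:ℝ)]
  have h1b : -(N:ℝ) ≤ (m.2:ℝ) ∧ (m.2:ℝ) ≤ (N:ℝ) := by constructor <;> nlinarith [sq_nonneg (m.1:ℝ)]
  constructor
  · simp only [Set.mem_Icc]; constructor 
    · exact_mod_cast h1a.1
    · exact_mod_cast h1a.2
  · simp only [Set.mem_Icc]; constructor 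
    · exact_mod_cast h1b.1
    · exact_mod_cast h1b.2

/-- Partial sums `S_N = ∑_{|k| ≤ N} ⟨k⟩^{-2(1-α)} ⟨n-k⟩^{-2(1-α)}`. -/
noncomputable def SHeat (α : ℝ) (n : ℤ × ℤ) (N : ℕ) : ℝ :=
  ∑' k : ℤ × ℤ,
    Set.indicator {m : ℤ × ℤ | znorm2 m ≤ N}
      (fun m => jb2 m ^ (-(2 * (1 - α))) * jb2 (n - m) ^ (-(2 * (1 - α)))) k

lemma sheat_main (α : ℝ) (n : ℤ × ℤ) (N : ℕ) :
    (Real.sqrt 6 * jb2 n) ^ (-(2 * |2*α - 2|)) *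
      ∑ j ∈ Finset.Icc 1 (N/2), (j:ℝ) ^ (4*α - 3) ≤ SHeat α n N := by
  set A : ℝ := Real.sqrt 6 * jb2 n with hAdef
  have h6 : (1:ℝ) ≤ Real.sqrt 6 := by
    rw [show (1:ℝ) = Real.sqrt 1 by simp]; exact Real.sqrt_le_sqrt (by norm_num)
  have hA1 : 1 ≤ A := le_trans h6 (le_mul_of_one_le_right (by positivity) (one_le_jb2 n))
  have hA0 : 0 < A := lt_of_lt_of_le one_pos hA1
  set t : ℝ := 2*α - 2 with htdef
  set c0 : ℝ := A ^ (-(2 * |t|)) with hc0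
  set f : ℤ × ℤ → ℝ := Set.indicator {m : ℤ × ℤ | znorm2 m ≤ N}
      (fun m => jb2 m ^ (-(2 * (1 - α))) * jb2 (n - m) ^ (-(2 * (1 - α)))) with hf
  have hfnn : ∀ k, 0 ≤ f k := by
    intro k
    apply Set.indicator_nonneg
    intro m _
    exact mul_nonneg (Real.rpow_nonneg (jb2_pos m).le _) (Real.rpow_nonneg (jb2_pos _).le _)
  have key : ∀ j i : ℕ, 1 ≤ i → i ≤ j → j ≤ N/2 →
      c0 * (j:ℝ) ^ (2*t) ≤ f ((j:ℤ), (i:ℤ)) := by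
    intro j i hi hij hjN
    set k : ℤ × ℤ := ((j:ℤ), (i:ℤ)) with hk
    have hj1 : (1:ℝ) ≤ (j:ℝ) := by exact_mod_cast le_trans hi hij
    have hj0 : (0:ℝ) < (j:ℝ) := lt_of_lt_of_le one_pos hj1
    have hiR : (i:ℝ) ≤ (j:ℝ) := by exact_mod_cast hij
    have hi0 : (0:ℝ) ≤ (i:ℝ) := by positivity
    have hjN' : 2 * (j:ℝ) ≤ (N:ℝ) := by
      have : 2 * j ≤ N := by omega
      exact_mod_cast this
    have hmem : k ∈ {m : ℤ × ℤ | znorm2 m ≤ N} := by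
      simp only [Set.mem_setOf_eq, znorm2, hk]
      push_cast
      rw [show ((N:ℝ)) = Real.sqrt ((N:ℝ)^2) from (Real.sqrt_sq (by positivity)).symm]
      apply Real.sqrt_le_sqrt
      nlinarith
    rw [hf, Set.indicator_of_mem hmem]
    have hexp : -(2 * (1 - α)) = t := by rw [htdef]; ring
    rw [hexp]
    have hjb : jb2 k = Real.sqrt (1 + (j:ℝ)^2 + (i:ℝ)^2) := by
      rw [jb2, hk]; push_cast; ring_nf
    have hbk_low : (j:ℝ) ≤ jb2 k := by
      rw [hjb]
      calc (j:ℝ) = Real.sqrt ((j:ℝ)^2) := (Real.sqrt_sq hj0.le).symm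
        _ ≤ _ := Real.sqrt_le_sqrt (by nlinarith)
    have hsqrt3 : jb2 k ≤ Real.sqrt 3 * (j:ℝ) := by
      rw [hjb]
      calc Real.sqrt (1 + (j:ℝ)^2 + (i:ℝ)^2) ≤ Real.sqrt (3 * (j:ℝ)^2) :=
            Real.sqrt_le_sqrt (by nlinarith)
        _ = Real.sqrt 3 * (j:ℝ) := by
            rw [Real.sqrt_mul (by norm_num), Real.sqrt_sq hj0.le]
    have h36 : Real.sqrt 3 ≤ Real.sqrt 6 := Real.sqrt_le_sqrt (by norm_num)
    have hbk_high : jb2 k ≤ A * (j:ℝ) := by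
      calc jb2 k ≤ Real.sqrt 3 * (j:ℝ) := hsqrt3
        _ ≤ Real.sqrt 6 * (j:ℝ) := by nlinarith [Real.sqrt_nonneg 3]
        _ ≤ A * (j:ℝ) := by
            rw [hAdef]
            nlinarith [mul_nonneg (mul_nonneg (Real.sqrt_nonneg 6) hj0.le)
              (sub_nonneg.mpr (one_le_jb2 n))]
    have hbk_lowdiv : (j:ℝ) / A ≤ jb2 k :=
      le_trans (div_le_self hj0.le hA1) hbk_low
    have h26 : Real.sqrt 2 * jb2 n ≤ A := by
      rw [hAdef]
      nlinarith [Real.sqrt_le_sqrt (show (2:ℝ) ≤ 6 by norm_num), one_le_jb2 n, jb2_pos n]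
    have hnk_high : jb2 (n - k) ≤ A * (j:ℝ) := by
      calc jb2 (n - k) ≤ Real.sqrt 2 * jb2 n * jb2 k := jb2_sub_le n k
        _ ≤ Real.sqrt 2 * jb2 n * (Real.sqrt 3 * (j:ℝ)) := by
            apply mul_le_mul_of_nonneg_left hsqrt3
            exact mul_nonneg (Real.sqrt_nonneg 2) (jb2_pos n).le
        _ = (Real.sqrt 2 * Real.sqrt 3) * jb2 n * (j:ℝ) := by ring
        _ = Real.sqrt 6 * jb2 n * (j:ℝ) := by
            rw [← Real.sqrt_mul (by norm_num : (0:ℝ) ≤ 2)]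
            norm_num
        _ = A * (j:ℝ) := by rw [hAdef]
    have hnk_low : (j:ℝ) / A ≤ jb2 (n - k) := by
      have hkk : jb2 k ≤ Real.sqrt 2 * jb2 n * jb2 (n - k) := by
        have := jb2_sub_le n (n - k)
        rwa [sub_sub_cancel] at this
      have : (j:ℝ) ≤ A * jb2 (n - k) := by
        calc (j:ℝ) ≤ jb2 k := hbk_low
          _ ≤ Real.sqrt 2 * jb2 n * jb2 (n - k) := hkk
          _ ≤ A * jb2 (n - k) := by
              apply mul_le_mul_of_nonneg_right h26 (jb2_pos (n - k)).le
      rw [div_le_iff₀ hA0]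
      linarith [this]
    have hb1 := rpow_bridge (t := t) hA1 hj0 hbk_lowdiv hbk_high
    have hb2 := rpow_bridge (t := t) hA1 hj0 hnk_low hnk_high
    calc c0 * (j:ℝ)^(2*t) = (A^(-|t|) * (j:ℝ)^t) * (A^(-|t|) * (j:ℝ)^t) := by
          rw [hc0, show -(2*|t|) = -|t| + -|t| by ring, show 2*t = t + t by ring,
            Real.rpow_add hA0, Real.rpow_add hj0]
          ring
      _ ≤ jb2 k ^ t * jb2 (n - k) ^ t := by
          apply mul_le_mul hb1 hb2 (by positivity)
          exact Real.rpow_nonneg (jb2_pos k).le t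
  -- assemble
  have hsum : Summable f := by
    apply summable_of_ne_finset_zero (s := (sheat_finite N).toFinset)
    intro b hb
    apply Set.indicator_of_notMem
    simpa using hb
  set sg : Finset ((_ : ℕ) × ℕ) := (Finset.Icc 1 (N/2)).sigma (fun j => Finset.Icc 1 j) with hsg
  have h1 : ∑ p ∈ sg.image (fun x : (_ : ℕ) × ℕ => ((x.1:ℤ), (x.2:ℤ))), f p ≤ SHeat α n N := by
    rw [SHeat]
    exact Summable.sum_le_tsum _ (fun k _ => hfnn k) hsum
  refine le_trans ?_ h1
  rw [Finset.sum_image (by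
    intro x _ y _ hxy
    simp only [Prod.mk.injEq, Nat.cast_inj] at hxy
    exact Sigma.ext hxy.1 (heq_of_eq hxy.2))]
  rw [Finset.sum_sigma, Finset.mul_sum]
  apply Finset.sum_le_sum
  intro j hj
  obtain ⟨hj1, hj2⟩ := Finset.mem_Icc.mp hj
  have hj0 : (0:ℝ) < (j:ℝ) := by exact_mod_cast hj1
  have hcard : (Finset.Icc 1 j).card = j := by rw [Nat.card_Icc]; omega
  have hnb := Finset.card_nsmul_le_sum (Finset.Icc 1 j) (fun i => f ((j:ℤ), (i:ℤ)))
      (c0 * (j:ℝ)^(2*t))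
      (fun i hi => key j i (Finset.mem_Icc.mp hi).1 (le_trans (Finset.mem_Icc.mp hi).2 le_rfl) hj2)
  rw [hcard, nsmul_eq_mul] at hnb
  refine le_trans (le_of_eq ?_) hnb
  rw [show 4*α - 3 = 1 + 2*t by rw [htdef]; ring, Real.rpow_add hj0, Real.rpow_one]
  ring


/-- Divergence underlying the negative part of Proposition 1.4(i): the Wick square of the
heat stochastic convolution fails to be a spatial distribution for `α ≥ 1/2`. -/
theorem stmt6 (α : ℝ) (hα : 1 / 2 ≤ α) (n : ℤ × ℤ) :
    Filter.Tendsto (fun N : ℕ => SHeat α n N) Filter.atTop Filter.atTop ∧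
    ∃ c > 0, ∃ N₀ : ℕ, ∀ N : ℕ, N₀ ≤ N →
      (α = 1 / 2 → c * Real.log N ≤ SHeat α n N) ∧
      (1 / 2 < α → c * (N : ℝ) ^ (4 * α - 2) ≤ SHeat α n N) := by
  have h6 : (0:ℝ) < Real.sqrt 6 * jb2 n :=
    mul_pos (Real.sqrt_pos.mpr (by norm_num)) (jb2_pos n)
  set c0 : ℝ := (Real.sqrt 6 * jb2 n) ^ (-(2 * |2*α - 2|)) with hc0
  have hc0pos : 0 < c0 := Real.rpow_pos_of_pos h6 _
  have h8 : (0:ℝ) < (8:ℝ) ^ (-(4*α - 2)) := Real.rpow_pos_of_pos (by norm_num) _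
  set c : ℝ := min (c0 / 2) (c0 * (8:ℝ) ^ (-(4*α - 2))) with hc
  have hcpos : 0 < c := lt_min (by positivity) (by positivity)
  have H : ∀ N : ℕ, 4 ≤ N →
      (α = 1 / 2 → c * Real.log N ≤ SHeat α n N) ∧
      (1 / 2 < α → c * (N : ℝ) ^ (4 * α - 2) ≤ SHeat α n N) := by
    intro N hN
    have hmain := sheat_main α n N
    set M := N / 2 with hM
    have hM1 : 1 ≤ M := by omega
    have hMb : (N:ℝ)/2 ≤ (M:ℝ) + 1 := by
      have h' : N ≤ 2 * M + 1 := by omega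
      have := (Nat.cast_le (α := ℝ)).2 h'
      push_cast at this; linarith
    have hMb2 : (N:ℝ)/8 ≤ (M:ℝ)/2 := by
      have h' : N ≤ 2 * M + 1 := by omega
      have h1 := (Nat.cast_le (α := ℝ)).2 h'
      have h2 := (Nat.cast_le (α := ℝ)).2 hM1
      push_cast at h1 h2; linarith
    constructor
    · intro hαeq
      have hexp : (4*α - 3) = -1 := by rw [hαeq]; norm_num
      have hlog : Real.log ((M:ℝ)+1) ≤ ∑ j ∈ Finset.Icc 1 M, (j:ℝ)^(4*α-3) := by
        rw [hexp]; exact log_le_sum_inv M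
      have hN4 : (4:ℝ) ≤ (N:ℝ) := by exact_mod_cast hN
      have hlogN : Real.log 4 ≤ Real.log N := Real.log_le_log (by norm_num) hN4
      have hlog2 : Real.log ((N:ℝ)/2) ≤ Real.log ((M:ℝ)+1) :=
        Real.log_le_log (by positivity) hMb
      have h42 : Real.log 4 = 2 * Real.log 2 := by
        rw [show (4:ℝ) = 2^2 by norm_num, Real.log_pow]; push_cast; ring
      have hhalf : (1/2) * Real.log N ≤ Real.log ((N:ℝ)/2) := by
        rw [Real.log_div (by positivity) (by norm_num)]
        linarith
      have hlogNnn : (0:ℝ) ≤ Real.log N := by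
        have := Real.log_nonneg (show (1:ℝ) ≤ 4 by norm_num)
        linarith
      calc c * Real.log N ≤ (c0/2) * Real.log N :=
            mul_le_mul_of_nonneg_right (min_le_left _ _) hlogNnn
        _ = c0 * ((1/2) * Real.log N) := by ring
        _ ≤ c0 * Real.log ((M:ℝ)+1) := by
            apply mul_le_mul_of_nonneg_left _ hc0pos.le
            linarith
        _ ≤ c0 * ∑ j ∈ Finset.Icc 1 M, (j:ℝ)^(4*α-3) :=
            mul_le_mul_of_nonneg_left hlog hc0pos.le
        _ ≤ SHeat α n N := hmain
    · intro hαlt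
      have hs : -1 < 4*α - 3 := by linarith
      have hsum := sum_rpow_ge hs hM1
      have hXs : ((N:ℝ)/8) ^ (4*α-2) ≤ ((M:ℝ)/2)^(4*α-2) :=
        Real.rpow_le_rpow (by positivity) hMb2 (by linarith)
      have hNs : ((N:ℝ)/8)^(4*α-2) = (8:ℝ)^(-(4*α-2)) * (N:ℝ)^(4*α-2) := by
        rw [Real.div_rpow (by positivity) (by norm_num), Real.rpow_neg (by norm_num)]
        ring
      have hrnn : (0:ℝ) ≤ (N:ℝ)^(4*α-2) := Real.rpow_nonneg (by positivity) _
      calc c * (N:ℝ)^(4*α-2) ≤ (c0 * (8:ℝ)^(-(4*α-2))) * (N:ℝ)^(4*α-2) :=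
            mul_le_mul_of_nonneg_right (min_le_right _ _) hrnn
        _ = c0 * ((N:ℝ)/8)^(4*α-2) := by rw [hNs]; ring
        _ ≤ c0 * ((M:ℝ)/2)^(4*α-2) := mul_le_mul_of_nonneg_left hXs hc0pos.le
        _ = c0 * ((M:ℝ)/2)^(1+(4*α-3)) := by
            rw [show (1:ℝ)+(4*α-3) = 4*α-2 by ring]
        _ ≤ c0 * ∑ j ∈ Finset.Icc 1 M, (j:ℝ)^(4*α-3) :=
            mul_le_mul_of_nonneg_left hsum hc0pos.le
        _ ≤ SHeat α n N := hmain
  refine ⟨?_, c, hcpos, 4, H⟩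
  rcases eq_or_lt_of_le hα with heq | hlt
  · refine Filter.tendsto_atTop_mono' Filter.atTop
      (f₁ := fun N : ℕ => c * Real.log N) ?_ ?_
    · exact Filter.eventually_atTop.mpr ⟨4, fun N hN => (H N hN).1 heq.symm⟩
    · exact (Real.tendsto_log_atTop.comp tendsto_natCast_atTop_atTop).const_mul_atTop hcpos
  · refine Filter.tendsto_atTop_mono' Filter.atTop
      (f₁ := fun N : ℕ => c * (N:ℝ) ^ (4 * α - 2)) ?_ ?_
    · exact Filter.eventually_atTop.mpr ⟨4, fun N hN => (H N hN).2 hlt⟩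
    · exact ((tendsto_rpow_atTop (by linarith : (0:ℝ) < 4*α - 2)).comp
        tendsto_natCast_atTop_atTop).const_mul_atTop hcpos
end

section
/- For every T > 0 there exists a constant C(T) > 0 such that for all real numbers κ₁, κ₂ and every t ∈ [0, T]: | ∫₀^t e^{−i t₁ κ₁} ( ∫₀^{t₁} t₂² e^{−i t₂ κ₂} dt₂ ) dt₁ | ≤ C(T) (1 + |κ₁|)^{−1}. (This is the oscillatory double-integral bound, equation (X5) of the paper, obtained by switching the order of integration and integrating first in t₁.) -/
/-!
Integrating by parts against `e^{-isκ} / (-iκ)` bounds `|κ|` times the outer integral by the size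
of the inner integral `F` and of its derivative, while the crude bound `|e^{-isκ}| = 1` controls
the integral itself; adding the two gives the factor `(1 + |κ|)⁻¹`.
-/

open Complex Set intervalIntegral MeasureTheory

lemma norm_cexp_neg_I_mul_ofReal_mul (x κ : ℝ) : ‖cexp (-I * x * κ)‖ = 1 := by
  simp [norm_exp]

lemma hasDerivAt_cexp_neg_I_mul_ofReal_mul_div {κ : ℝ} (hκ : κ ≠ 0) (x : ℝ) :
    HasDerivAt (fun s : ℝ => cexp (-I * s * κ) / (-I * κ)) (cexp (-I * x * κ)) x := by
  have hne : -I * (κ : ℂ) ≠ 0 := by simp [hκ]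
  have hlin : HasDerivAt (fun s : ℝ => -I * s * κ) (-I * κ) x := by
    simpa using ((ofRealCLM.hasDerivAt (x := x)).const_mul (-I)).mul_const (κ : ℂ)
  have h := hlin.cexp.div_const (-I * κ)
  rwa [mul_div_cancel_right₀ _ hne] at h

section OscillatoryIntegral

variable {F f : ℝ → ℂ} {κ t M M' : ℝ}

lemma norm_integral_cexp_mul_le (ht : 0 ≤ t) (hFM : ∀ s ∈ Icc 0 t, ‖F s‖ ≤ M) :
    ‖∫ s in 0..t, cexp (-I * s * κ) * F s‖ ≤ t * M := by
  have := norm_integral_le_of_norm_le_const (a := 0) (b := t) (C := M)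
    (f := fun s => cexp (-I * s * κ) * F s) fun s hs => by
      rw [uIoc_of_le ht] at hs
      rw [norm_mul, norm_cexp_neg_I_mul_ofReal_mul, one_mul]
      exact hFM s (Ioc_subset_Icc_self hs)
  simpa [abs_of_nonneg ht, mul_comm] using this

/-- Integration by parts against the antiderivative `cexp (-I * s * κ) / (-I * κ)`. -/
lemma norm_integral_cexp_mul_le_div (hκ : κ ≠ 0) (ht : 0 ≤ t)
    (hF : ∀ s ∈ Icc 0 t, HasDerivAt F (f s) s) (hf : IntervalIntegrable f volume 0 t)
    (hFM : ∀ s ∈ Icc 0 t, ‖F s‖ ≤ M) (hfM : ∀ s ∈ Icc 0 t, ‖f s‖ ≤ M') :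
    ‖∫ s in 0..t, cexp (-I * s * κ) * F s‖ ≤ (2 * M + t * M') / |κ| := by
  set v : ℝ → ℂ := fun s => cexp (-I * s * κ) / (-I * κ)
  have hv : ∀ s, ‖v s‖ = |κ|⁻¹ := fun s => by simp [v, norm_exp]
  have hcexp : Continuous fun s : ℝ => cexp (-I * s * κ) := by fun_prop
  have hibp : ∫ s in 0..t, F s * cexp (-I * s * κ)
      = F t * v t - F 0 * v 0 - ∫ s in 0..t, f s * v s :=
    integral_mul_deriv_eq_deriv_mul (fun s hs => hF s (by rwa [uIcc_of_le ht] at hs))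
      (fun s _ => hasDerivAt_cexp_neg_I_mul_ofReal_mul_div hκ s) hf
      (hcexp.intervalIntegrable 0 t)
  have hrem : ‖∫ s in 0..t, f s * v s‖ ≤ M' * |κ|⁻¹ * t := by
    simpa [abs_of_nonneg ht] using norm_integral_le_of_norm_le_const (a := 0) (b := t)
      (f := fun s => f s * v s) fun s hs => by
        rw [uIoc_of_le ht] at hs
        rw [norm_mul, hv]
        gcongr
        exact hfM s (Ioc_subset_Icc_self hs)
  simp_rw [mul_comm (cexp _)]
  rw [hibp]
  calc ‖F t * v t - F 0 * v 0 - ∫ s in 0..t, f s * v s‖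
      ≤ ‖F t‖ * |κ|⁻¹ + ‖F 0‖ * |κ|⁻¹ + M' * |κ|⁻¹ * t := by
        refine (norm_sub_le _ _).trans (add_le_add ((norm_sub_le _ _).trans ?_) hrem)
        simp [hv]
    _ ≤ M * |κ|⁻¹ + M * |κ|⁻¹ + M' * |κ|⁻¹ * t := by
        gcongr
        · exact hFM t ⟨ht, le_rfl⟩
        · exact hFM 0 ⟨le_rfl, ht⟩
    _ = (2 * M + t * M') / |κ| := by ring

lemma norm_integral_cexp_mul_le_mul_inv (ht : 0 ≤ t)
    (hF : ∀ s ∈ Icc 0 t, HasDerivAt F (f s) s) (hf : IntervalIntegrable f volume 0 t)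
    (hFM : ∀ s ∈ Icc 0 t, ‖F s‖ ≤ M) (hfM : ∀ s ∈ Icc 0 t, ‖f s‖ ≤ M') :
    ‖∫ s in 0..t, cexp (-I * s * κ) * F s‖ ≤ (t * M + 2 * M + t * M') * (1 + |κ|)⁻¹ := by
  set N := ‖∫ s in 0..t, cexp (-I * s * κ) * F s‖
  have hM : 0 ≤ M := (norm_nonneg _).trans (hFM 0 ⟨le_rfl, ht⟩)
  have hM' : 0 ≤ M' := (norm_nonneg _).trans (hfM 0 ⟨le_rfl, ht⟩)
  have hosc : |κ| * N ≤ 2 * M + t * M' := by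
    rcases eq_or_ne κ 0 with rfl | hκ
    · simp only [abs_zero, zero_mul]; positivity
    rw [← le_div_iff₀' (abs_pos.mpr hκ)]
    exact norm_integral_cexp_mul_le_div hκ ht hF hf hFM hfM
  rw [← div_eq_mul_inv, le_div_iff₀ (by positivity)]
  linarith [norm_integral_cexp_mul_le (κ := κ) ht hFM]

end OscillatoryIntegral

lemma norm_integral_cexp_mul_integral_le {g : ℝ → ℂ} {κ t T M : ℝ} (hg : Continuous g)
    (hgM : ∀ s ∈ Icc 0 T, ‖g s‖ ≤ M) (ht : t ∈ Icc 0 T) :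
    ‖∫ s in 0..t, cexp (-I * s * κ) * ∫ x in 0..s, g x‖ ≤ (T ^ 2 + 3 * T) * M * (1 + |κ|)⁻¹ := by
  obtain ⟨ht0, htT⟩ := ht
  have hT : 0 ≤ T := ht0.trans htT
  have hM : 0 ≤ M := (norm_nonneg _).trans (hgM 0 ⟨le_rfl, hT⟩)
  have hgM' : ∀ s ∈ Icc 0 t, ‖g s‖ ≤ M := fun s hs => hgM s ⟨hs.1, hs.2.trans htT⟩
  have hFM : ∀ s ∈ Icc 0 t, ‖∫ x in 0..s, g x‖ ≤ T * M := fun s hs => by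
    calc ‖∫ x in 0..s, g x‖ ≤ M * |s - 0| := norm_integral_le_of_norm_le_const fun x hx => by
          rw [uIoc_of_le hs.1] at hx
          exact hgM' x ⟨hx.1.le, hx.2.trans hs.2⟩
      _ ≤ T * M := by rw [sub_zero, abs_of_nonneg hs.1, mul_comm]; gcongr; exact hs.2.trans htT
  calc _ ≤ (t * (T * M) + 2 * (T * M) + t * M) * (1 + |κ|)⁻¹ :=
        norm_integral_cexp_mul_le_mul_inv ht0
          (fun s _ => integral_hasDerivAt_right (hg.intervalIntegrable 0 s)
            (hg.stronglyMeasurableAtFilter _ _) hg.continuousAt)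
          (hg.intervalIntegrable 0 t) hFM hgM'
    _ ≤ (T * (T * M) + 2 * (T * M) + T * M) * (1 + |κ|)⁻¹ := by gcongr
    _ = (T ^ 2 + 3 * T) * M * (1 + |κ|)⁻¹ := by ring

/-- Oscillatory double-integral bound (equation (X5)). -/
theorem stmt11 (T : ℝ) (hT : 0 < T) :
    ∃ C > 0, ∀ κ₁ κ₂ : ℝ, ∀ t ∈ Set.Icc (0 : ℝ) T,
      ‖∫ t₁ in (0 : ℝ)..t, Complex.exp (-Complex.I * (t₁ : ℂ) * (κ₁ : ℂ)) *
          ∫ t₂ in (0 : ℝ)..t₁, ((t₂ : ℂ)) ^ 2 * Complex.exp (-Complex.I * (t₂ : ℂ) * (κ₂ : ℂ))‖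
        ≤ C * (1 + |κ₁|)⁻¹ := by
  refine ⟨(T ^ 2 + 3 * T) * T ^ 2, by positivity, fun κ₁ κ₂ t ht => ?_⟩
  refine norm_integral_cexp_mul_integral_le (by fun_prop) (fun s hs => ?_) ht
  rw [norm_mul, norm_cexp_neg_I_mul_ofReal_mul, mul_one, norm_pow, norm_real,
    Real.norm_of_nonneg hs.1]
  exact pow_le_pow_left₀ hs.1 hs.2 2
end

section
/- For every real number a ≠ 0 and every t ≥ 0: ∫₀^t ∫₀^{t₁} cos((t₁ − t₂) a) t₂² dt₂ dt₁ = (2 / a⁴) ( cos(t a) − 1 + t² a² / 2 ), and this quantity is nonnegative. (This is the explicit kernel identity, equation (D1a) of the paper, whose nonnegativity is the key sign information in the sharpness argument for the multilinear smoothing estimate.) -/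
/-!
Both integrals are evaluated by exhibiting primitives: the inner one (two integrations by parts)
is `2 t₁ / a² - 2 sin (t₁ a) / a³`, whose primitive is `t₁² / a² + 2 cos (t₁ a) / a⁴`.
Nonnegativity is the Taylor bound `cos x ≥ 1 - x² / 2`.
-/

open Real

theorem Real.cos_sub_one_add_sq_div_two_nonneg (x : ℝ) : 0 ≤ cos x - 1 + x ^ 2 / 2 := by
  linarith [one_sub_sq_div_two_le_cos (x := x)]

theorem integral_cos_sub_mul_mul_sq {a : ℝ} (ha : a ≠ 0) (s : ℝ) :
    ∫ u in (0 : ℝ)..s, cos ((s - u) * a) * u ^ 2 = 2 * s / a ^ 2 - 2 * sin (s * a) / a ^ 3 := by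
  have hderiv (u : ℝ) : HasDerivAt
      (fun u => -u ^ 2 * sin ((s - u) * a) / a + 2 * u * cos ((s - u) * a) / a ^ 2
        + 2 * sin ((s - u) * a) / a ^ 3)
      (cos ((s - u) * a) * u ^ 2) u := by
    have hθ : HasDerivAt (fun u => (s - u) * a) (-a) u := by
      simpa using ((hasDerivAt_id u).const_sub s).mul_const a
    refine (((((hasDerivAt_pow 2 u).neg.mul hθ.sin).div_const a).add
      ((((hasDerivAt_id u).const_mul 2).mul hθ.cos).div_const (a ^ 2))).add
      ((hθ.sin.const_mul 2).div_const (a ^ 3))).congr_deriv ?_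
    simp only [Pi.neg_apply, id]
    field_simp
    ring
  rw [intervalIntegral.integral_eq_sub_of_hasDerivAt (fun u _ => hderiv u)
    ((by fun_prop : Continuous fun u => cos ((s - u) * a) * u ^ 2).intervalIntegrable _ _)]
  simp

theorem integral_two_mul_div_sq_sub_two_mul_sin_div_cube {a : ℝ} (ha : a ≠ 0) (t : ℝ) :
    ∫ s in (0 : ℝ)..t, (2 * s / a ^ 2 - 2 * sin (s * a) / a ^ 3)
      = 2 / a ^ 4 * (cos (t * a) - 1 + t ^ 2 * a ^ 2 / 2) := by
  have hderiv (s : ℝ) : HasDerivAt (fun s => s ^ 2 / a ^ 2 + 2 * cos (s * a) / a ^ 4)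
      (2 * s / a ^ 2 - 2 * sin (s * a) / a ^ 3) s := by
    have hθ : HasDerivAt (fun s => s * a) a s := by
      simpa using (hasDerivAt_id s).mul_const a
    refine (((hasDerivAt_pow 2 s).div_const (a ^ 2)).add
      ((hθ.cos.const_mul 2).div_const (a ^ 4))).congr_deriv ?_
    field_simp
    ring
  rw [intervalIntegral.integral_eq_sub_of_hasDerivAt (fun s _ => hderiv s)
    ((by fun_prop : Continuous fun s => 2 * s / a ^ 2 - 2 * sin (s * a) / a ^ 3).intervalIntegrable _ _)]
  simp only [zero_mul, cos_zero, ne_eq, OfNat.ofNat_ne_zero, not_false_eq_true, zero_pow, zero_div,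
    mul_one, zero_add]
  field_simp
  ring

theorem stmt14_general (a : ℝ) (ha : a ≠ 0) (t : ℝ) :
    (∫ t₁ in (0 : ℝ)..t, ∫ t₂ in (0 : ℝ)..t₁, Real.cos ((t₁ - t₂) * a) * t₂ ^ 2)
        = 2 / a ^ 4 * (Real.cos (t * a) - 1 + t ^ 2 * a ^ 2 / 2) ∧
    0 ≤ 2 / a ^ 4 * (Real.cos (t * a) - 1 + t ^ 2 * a ^ 2 / 2) := by
  refine ⟨?_, mul_nonneg (by positivity) ?_⟩
  · simp_rw [integral_cos_sub_mul_mul_sq ha]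
    exact integral_two_mul_div_sq_sub_two_mul_sin_div_cube ha t
  · simpa only [mul_pow] using cos_sub_one_add_sq_div_two_nonneg (t * a)

/-- Explicit kernel identity (equation (D1a)) and its nonnegativity. -/
theorem stmt14 (a : ℝ) (ha : a ≠ 0) (t : ℝ) (ht : 0 ≤ t) :
    (∫ t₁ in (0 : ℝ)..t, ∫ t₂ in (0 : ℝ)..t₁, Real.cos ((t₁ - t₂) * a) * t₂ ^ 2)
        = 2 / a ^ 4 * (Real.cos (t * a) - 1 + t ^ 2 * a ^ 2 / 2) ∧
    0 ≤ 2 / a ^ 4 * (Real.cos (t * a) - 1 + t ^ 2 * a ^ 2 / 2) :=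
  stmt14_general a ha t
end

section
/- There exists an absolute constant C > 0 (one may take C = 3) such that for every real M ≥ 1 and all real numbers a, b with 2M ≤ a ≤ 4M and b² ≤ M: 0 ≤ (1 + M²)^{1/2} − (1 + a² + b²)^{1/2} + (1 + (a − M)² + b²)^{1/2} ≤ C. (This is the near-null-resonance estimate, equations (X7) and (D5) of the paper, for the frequency region K_M = { (a, b) : 2M ≤ a ≤ 4M, |b| ≤ M^{1/2} } with n = (M, 0), n₁ = (a, b), n − n₁ = (M − a, −b); it shows the modulation ⟨n⟩ − ⟨n₁⟩ + ⟨n − n₁⟩ stays bounded on K_M.) -/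
/-- Near-null-resonance estimate (equations (X7) and (D5)) on the region `K_M`. -/
theorem stmt16 :
    ∃ C > 0, ∀ M a b : ℝ, 1 ≤ M → 2 * M ≤ a → a ≤ 4 * M → b ^ 2 ≤ M →
      0 ≤ Real.sqrt (1 + M ^ 2) - Real.sqrt (1 + a ^ 2 + b ^ 2)
            + Real.sqrt (1 + (a - M) ^ 2 + b ^ 2) ∧
      Real.sqrt (1 + M ^ 2) - Real.sqrt (1 + a ^ 2 + b ^ 2)
            + Real.sqrt (1 + (a - M) ^ 2 + b ^ 2) ≤ C := by
  refine ⟨3, by norm_num, fun M a b hM h2M h4M hb => ?_⟩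
  have hb0 : (0:ℝ) ≤ b ^ 2 := sq_nonneg b
  have h1 : (0:ℝ) ≤ 1 + M ^ 2 := by positivity
  have h2 : (0:ℝ) ≤ 1 + a ^ 2 + b ^ 2 := by positivity
  have h3 : (0:ℝ) ≤ 1 + (a - M) ^ 2 + b ^ 2 := by positivity
  set s1 := Real.sqrt (1 + M ^ 2) with hs1def
  set s2 := Real.sqrt (1 + a ^ 2 + b ^ 2) with hs2def
  set s3 := Real.sqrt (1 + (a - M) ^ 2 + b ^ 2) with hs3def
  have hs1 : s1 ^ 2 = 1 + M ^ 2 := Real.sq_sqrt h1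
  have hs2 : s2 ^ 2 = 1 + a ^ 2 + b ^ 2 := Real.sq_sqrt h2
  have hs3 : s3 ^ 2 = 1 + (a - M) ^ 2 + b ^ 2 := Real.sq_sqrt h3
  have hs1n : 0 ≤ s1 := Real.sqrt_nonneg _
  have hs2n : 0 ≤ s2 := Real.sqrt_nonneg _
  have hs3n : 0 ≤ s3 := Real.sqrt_nonneg _
  have haM : M ≤ a - M := by linarith
  have hM0 : (0:ℝ) < M := by linarith
  -- s1 ≥ M, s3 ≥ a - M, s2 ≥ a
  have hs1M : M ≤ s1 := by
    nlinarith [sq_nonneg (s1 - M)]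
  have hs3aM : a - M ≤ s3 := by
    nlinarith [sq_nonneg (s3 - (a - M))]
  have hs2a : a ≤ s2 := by
    nlinarith [sq_nonneg (s2 - a)]
  constructor
  · -- lower bound: s2 ≤ s1 + s3
    have hprod : M * (a - M) ≤ s1 * s3 :=
      mul_le_mul hs1M hs3aM (by linarith) hs1n
    have hsq : s2 ^ 2 ≤ (s1 + s3) ^ 2 := by
      have expand : (s1 + s3) ^ 2 = s1 ^ 2 + 2 * (s1 * s3) + s3 ^ 2 := by ring
      rw [expand, hs1, hs2, hs3]
      nlinarith [hprod]
    have key : s2 ≤ s1 + s3 := by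
      have hpos : (0:ℝ) ≤ s1 + s3 := by linarith
      have h' : 1 + a ^ 2 + b ^ 2 ≤ (s1 + s3) ^ 2 := hs2 ▸ hsq
      have h2' := Real.sqrt_le_sqrt h'
      rwa [Real.sqrt_sq hpos] at h2'
    linarith
  · -- upper bound
    have e1 : (M + 1/2) ^ 2 = M ^ 2 + M + 1/4 := by ring
    have e3 : ((a - M) + 1) ^ 2 = 1 + (a - M) ^ 2 + 2 * (a - M) := by ring
    have hu1 : s1 ≤ M + 1/2 := by
      have h := Real.sqrt_le_sqrt (show 1 + M ^ 2 ≤ (M + 1/2) ^ 2 by rw [e1]; linarith)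
      rwa [Real.sqrt_sq (by linarith)] at h
    have hu3 : s3 ≤ (a - M) + 1 := by
      have h := Real.sqrt_le_sqrt
        (show 1 + (a - M) ^ 2 + b ^ 2 ≤ ((a - M) + 1) ^ 2 by rw [e3]; linarith)
      rwa [Real.sqrt_sq (by linarith)] at h
    linarith
end

section
/- There exists an absolute constant C > 0 such that for all real numbers a > 0, b ≥ 2a, and t > 0: | ∫₀^t (sin((t − t₁) a) / a) ∫₀^{t₁} (sin((t − t₂) a) / a) cos((t₁ − t₂) b) t₂² dt₂ dt₁ | ≤ C t³ / (a² b). (This is the oscillatory upper bound, equation (div2b) of the paper, used in the proof of Proposition 1.3 to show that the high-modulation contribution to the variance of the second-order wave object is summable.) -/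
/-!
By the product-to-sum formula the inner integrand is `(2a)⁻¹ s² (sin (c₁ + (b - a) s) + sin (c₂ - (a + b) s))`,
and both frequencies are at least `b / 2` in absolute value. One integration by parts (integrate the sine,
differentiate `s²`) bounds `∫₀^T s² sin (c + ω s) ds` by `3 T² / |ω|`, which gains the factor `1 / b` over the
trivial bound; the outer integral is then estimated trivially.
-/

open Real intervalIntegral

theorem abs_integral_sq_mul_sin_le (c ω T : ℝ) (hω : ω ≠ 0) :
    |∫ s in (0 : ℝ)..T, s ^ 2 * sin (c + ω * s)| ≤ 3 * T ^ 2 / |ω| := by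
  have hu : ∀ s, HasDerivAt (fun s : ℝ => s ^ 2) (2 * s) s := fun s => by
    simpa using hasDerivAt_pow 2 s
  have hv : ∀ s, HasDerivAt (fun s => -cos (c + ω * s) / ω) (sin (c + ω * s)) s := fun s => by
    have hlin : HasDerivAt (fun s => c + ω * s) ω s := by
      simpa using ((hasDerivAt_id s).const_mul ω).const_add c
    refine (hlin.cos.neg.div_const ω).congr_deriv ?_
    field_simp
  have hparts := integral_mul_deriv_eq_deriv_mul (a := 0) (b := T)
    (fun s _ => hu s) (fun s _ => hv s)
    (by apply Continuous.intervalIntegrable; fun_prop)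
    (by apply Continuous.intervalIntegrable; fun_prop)
  have hboundary : |T ^ 2 * (-cos (c + ω * T) / ω)| ≤ T ^ 2 / |ω| := by
    rw [abs_mul, abs_div, abs_neg, abs_of_nonneg (sq_nonneg T), ← mul_div_assoc]
    exact div_le_div_of_nonneg_right
      (mul_le_of_le_one_right (sq_nonneg T) (abs_cos_le_one _)) (abs_nonneg ω)
  have hremainder : |∫ s in (0 : ℝ)..T, 2 * s * (-cos (c + ω * s) / ω)| ≤ 2 * T ^ 2 / |ω| := by
    have hle : ∀ s ∈ Set.uIoc 0 T, ‖2 * s * (-cos (c + ω * s) / ω)‖ ≤ 2 * |T| / |ω| := by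
      intro s hs
      have hsT : |s| ≤ |T| := by
        simpa using Set.abs_sub_left_of_mem_uIcc (Set.uIoc_subset_uIcc hs)
      rw [norm_eq_abs, abs_mul, abs_mul, abs_div, abs_neg, abs_two, ← mul_div_assoc]
      refine div_le_div_of_nonneg_right ?_ (abs_nonneg ω)
      have := abs_cos_le_one (c + ω * s)
      have := abs_nonneg s
      nlinarith
    have := norm_integral_le_of_norm_le_const hle
    rw [norm_eq_abs, sub_zero] at this
    calc _ ≤ 2 * |T| / |ω| * |T| := this
      _ = 2 * T ^ 2 / |ω| := by rw [← sq_abs T]; ring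
  rw [hparts, zero_pow two_ne_zero, zero_mul, sub_zero]
  calc _ ≤ T ^ 2 / |ω| + 2 * T ^ 2 / |ω| := (abs_sub _ _).trans (add_le_add hboundary hremainder)
    _ = 3 * T ^ 2 / |ω| := by ring

theorem sin_div_mul_cos_mul_sq_eq_half_sum (a b t t₁ s : ℝ) (ha : a ≠ 0) :
    sin ((t - s) * a) / a * (cos ((t₁ - s) * b) * s ^ 2) =
      (2 * a)⁻¹ * (s ^ 2 * sin ((t * a - t₁ * b) + (b - a) * s)
        + s ^ 2 * sin ((t * a + t₁ * b) + (-(a + b)) * s)) := by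
  have hsum := two_mul_sin_mul_cos ((t - s) * a) ((t₁ - s) * b)
  rw [show (t - s) * a - (t₁ - s) * b = (t * a - t₁ * b) + (b - a) * s by ring,
    show (t - s) * a + (t₁ - s) * b = (t * a + t₁ * b) + (-(a + b)) * s by ring] at hsum
  rw [← mul_add, ← hsum]
  field_simp

theorem abs_integral_sin_div_mul_cos_mul_sq_le {a b : ℝ} (ha : 0 < a) (hab : 2 * a ≤ b)
    (t t₁ : ℝ) :
    |∫ s in (0 : ℝ)..t₁, sin ((t - s) * a) / a * (cos ((t₁ - s) * b) * s ^ 2)|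
      ≤ 6 * t₁ ^ 2 / (a * b) := by
  have hb : 0 < b := by linarith
  have hosc : ∀ c ω : ℝ, b / 2 ≤ |ω| →
      |∫ s in (0 : ℝ)..t₁, s ^ 2 * sin (c + ω * s)| ≤ 6 * t₁ ^ 2 / b := fun c ω hω => by
    calc _ ≤ 3 * t₁ ^ 2 / |ω| := abs_integral_sq_mul_sin_le c ω t₁ (abs_pos.mp (by linarith))
      _ ≤ 3 * t₁ ^ 2 / (b / 2) := by gcongr
      _ = 6 * t₁ ^ 2 / b := by ring
  have hdiff := hosc (t * a - t₁ * b) (b - a) (by rw [abs_of_pos (by linarith)]; linarith)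
  have hsum := hosc (t * a + t₁ * b) (-(a + b)) (by rw [abs_neg, abs_of_pos (by linarith)]; linarith)
  simp_rw [sin_div_mul_cos_mul_sq_eq_half_sum a b t t₁ _ ha.ne']
  rw [integral_const_mul, integral_add (by apply Continuous.intervalIntegrable; fun_prop)
    (by apply Continuous.intervalIntegrable; fun_prop), abs_mul, abs_of_pos (by positivity)]
  calc _ ≤ (2 * a)⁻¹ * (6 * t₁ ^ 2 / b + 6 * t₁ ^ 2 / b) := by
        gcongr; exact (abs_add_le _ _).trans (add_le_add hdiff hsum)
    _ = 6 * t₁ ^ 2 / (a * b) := by field_simp; ring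

/-- Oscillatory upper bound (equation (div2b)) for the high-modulation contribution. -/
theorem stmt17 :
    ∃ C > 0, ∀ a b t : ℝ, 0 < a → 2 * a ≤ b → 0 < t →
      |∫ t₁ in (0 : ℝ)..t, (Real.sin ((t - t₁) * a) / a) *
          ∫ t₂ in (0 : ℝ)..t₁, (Real.sin ((t - t₂) * a) / a) *
            (Real.cos ((t₁ - t₂) * b) * t₂ ^ 2)|
        ≤ C * t ^ 3 / (a ^ 2 * b) := by
  refine ⟨6, by norm_num, fun a b t ha hab ht => ?_⟩
  have hb : 0 < b := by linarith
  have hle : ∀ t₁ ∈ Set.uIoc 0 t, ‖sin ((t - t₁) * a) / a *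
      ∫ t₂ in (0 : ℝ)..t₁, sin ((t - t₂) * a) / a * (cos ((t₁ - t₂) * b) * t₂ ^ 2)‖
        ≤ a⁻¹ * (6 * t ^ 2 / (a * b)) := by
    intro t₁ ht₁
    rw [Set.uIoc_of_le ht.le] at ht₁
    rw [norm_eq_abs, abs_mul, abs_div, abs_of_pos ha, div_eq_inv_mul]
    gcongr
    · exact mul_le_of_le_one_right (by positivity) (abs_sin_le_one _)
    · refine (abs_integral_sin_div_mul_cos_mul_sq_le ha hab t t₁).trans ?_
      gcongr
      exacts [ht₁.1.le, ht₁.2]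
  calc _ ≤ a⁻¹ * (6 * t ^ 2 / (a * b)) * |t - 0| := norm_integral_le_of_norm_le_const hle
    _ = 6 * t ^ 3 / (a ^ 2 * b) := by rw [sub_zero, abs_of_pos ht]; field_simp
end

section
/- There exist absolute constants δ > 0 and c > 0 such that for all real numbers a > 0, b ∈ ℝ, and t > 0 satisfying t a ≤ δ and t |b| ≤ δ: ∫₀^t (sin((t − t₁) a) / a) ∫₀^{t₁} (sin((t − t₂) a) / a) cos((t₁ − t₂) b) t₂² dt₂ dt₁ ≥ c t⁶. (This is the lower bound, equations (div2c)–(div2d) of the paper, quantifying the high-to-low frequency energy transfer in the proof of Proposition 1.3: with a = ⟨n⟩ and b = ⟨k⟩ − ⟨n − k⟩ it gives E[|X_k(n,t)|²] ≳ t⁶ ⟨k⟩^{−4(1−α)}.) -/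
/-!
For `0 ≤ x ≤ 1` we have `sin x ≥ x / 2` and `cos x ≥ 1 / 2`. With `δ = 1` every argument of
`sin` and `cos` in the integrand lies in that range, so the kernel `sin ((t - s) a) / a` is at
least `(t - s) / 2` and the cosine factor at least `1 / 2`. All factors being nonnegative, the
double integral dominates the explicit polynomial integral
`∫₀ᵗ (t - t₁)/2 ∫₀^{t₁} (t - t₂)/2 · t₂²/2 dt₂ dt₁ = t⁶ / 960`.
-/

open intervalIntegral Set

lemma half_le_sin {x : ℝ} (h0 : 0 ≤ x) (h1 : x ≤ 1) : x / 2 ≤ Real.sin x := by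
  rcases h0.eq_or_lt with rfl | hpos
  · simp
  · nlinarith [Real.sin_gt_sub_cube hpos, pow_le_one₀ h0 h1 (n := 2)]

lemma one_half_le_cos {x : ℝ} (h : |x| ≤ 1) : 1 / 2 ≤ Real.cos x := by
  have hsq : x ^ 2 ≤ 1 := by nlinarith [sq_abs x, abs_nonneg x]
  nlinarith [Real.one_sub_sq_div_two_le_cos (x := x)]

lemma half_sub_le_sin_mul_div {a t s : ℝ} (ha : 0 < a) (hta : t * a ≤ 1) (hs : s ∈ Icc 0 t) :
    (t - s) / 2 ≤ Real.sin ((t - s) * a) / a := by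
  have hx0 : 0 ≤ (t - s) * a := mul_nonneg (by linarith [hs.2]) ha.le
  have hx1 : (t - s) * a ≤ 1 := by nlinarith [hs.1]
  rw [le_div_iff₀ ha]
  linarith [half_le_sin hx0 hx1]

lemma one_half_le_cos_mul {b t s : ℝ} (htb : t * |b| ≤ 1) (hs : s ∈ Icc 0 t) :
    1 / 2 ≤ Real.cos (s * b) := by
  apply one_half_le_cos
  rw [abs_mul, abs_of_nonneg hs.1]
  nlinarith [abs_nonneg b, hs.2]

lemma integral_mul_le_integral_mul {f g F G : ℝ → ℝ} {t : ℝ} (ht : 0 ≤ t)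
    (hfg : IntervalIntegrable (fun s ↦ f s * g s) MeasureTheory.volume 0 t)
    (hFG : IntervalIntegrable (fun s ↦ F s * G s) MeasureTheory.volume 0 t)
    (hf : ∀ s ∈ Icc 0 t, 0 ≤ f s ∧ f s ≤ F s) (hg : ∀ s ∈ Icc 0 t, 0 ≤ g s ∧ g s ≤ G s) :
    ∫ s in (0 : ℝ)..t, f s * g s ≤ ∫ s in (0 : ℝ)..t, F s * G s :=
  integral_mono_on ht hfg hFG fun s hs ↦
    mul_le_mul (hf s hs).2 (hg s hs).2 (hg s hs).1 ((hf s hs).1.trans (hf s hs).2)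

lemma integral_sub_mul_sq (t s : ℝ) :
    ∫ u in (0 : ℝ)..s, (t - u) / 2 * (u ^ 2 / 2) = (t * s ^ 3 / 3 - s ^ 4 / 4) / 4 := by
  have h : ∀ u : ℝ, (t - u) / 2 * (u ^ 2 / 2) = t / 4 * u ^ 2 - u ^ 3 / 4 := fun u ↦ by ring
  simp only [h]
  rw [integral_sub (Continuous.intervalIntegrable (by fun_prop) _ _)
    (Continuous.intervalIntegrable (by fun_prop) _ _)]
  simp
  ring

lemma integral_sub_mul_integral_sub_mul_sq (t : ℝ) :
    ∫ s in (0 : ℝ)..t, (t - s) / 2 * ((t * s ^ 3 / 3 - s ^ 4 / 4) / 4) = t ^ 6 / 960 := by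
  have h : ∀ s : ℝ, (t - s) / 2 * ((t * s ^ 3 / 3 - s ^ 4 / 4) / 4) =
      t ^ 2 / 24 * s ^ 3 - (7 * t / 96 * s ^ 4 - s ^ 5 / 32) := fun s ↦ by ring
  simp only [h]
  rw [integral_sub (Continuous.intervalIntegrable (by fun_prop) _ _)
      (Continuous.intervalIntegrable (by fun_prop) _ _),
    integral_sub (Continuous.intervalIntegrable (by fun_prop) _ _)
      (Continuous.intervalIntegrable (by fun_prop) _ _)]
  simp
  ring

noncomputable def innerIntegral (a b t t₁ : ℝ) : ℝ :=
  ∫ t₂ in (0 : ℝ)..t₁, (Real.sin ((t - t₂) * a) / a) * (Real.cos ((t₁ - t₂) * b) * t₂ ^ 2)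

lemma continuous_innerIntegral (a b t : ℝ) : Continuous (innerIntegral a b t) :=
  continuous_parametric_intervalIntegral_of_continuous (by fun_prop) continuous_id

lemma le_innerIntegral {a b t t₁ : ℝ} (ha : 0 < a) (hta : t * a ≤ 1) (htb : t * |b| ≤ 1)
    (ht₁ : t₁ ∈ Icc 0 t) :
    (t * t₁ ^ 3 / 3 - t₁ ^ 4 / 4) / 4 ≤ innerIntegral a b t t₁ := by
  rw [← integral_sub_mul_sq, innerIntegral]
  refine integral_mul_le_integral_mul ht₁.1 (Continuous.intervalIntegrable (by fun_prop) _ _)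
    (Continuous.intervalIntegrable (by fun_prop) _ _) (fun u hu ↦ ?_) (fun u hu ↦ ?_)
  · have hut : u ∈ Icc 0 t := ⟨hu.1, hu.2.trans ht₁.2⟩
    exact ⟨by linarith [hut.2], half_sub_le_sin_mul_div ha hta hut⟩
  · have hcos := one_half_le_cos_mul htb (s := t₁ - u) ⟨by linarith [hu.2], by linarith [hu.1, ht₁.2]⟩
    exact ⟨by positivity, by nlinarith [sq_nonneg u]⟩

/-- Lower bound (equations (div2c)–(div2d)) quantifying the high-to-low energy transfer. -/
theorem stmt18 :
    ∃ δ > 0, ∃ c > 0, ∀ a b t : ℝ, 0 < a → 0 < t → t * a ≤ δ → t * |b| ≤ δ →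
      c * t ^ 6 ≤
        ∫ t₁ in (0 : ℝ)..t, (Real.sin ((t - t₁) * a) / a) *
          ∫ t₂ in (0 : ℝ)..t₁, (Real.sin ((t - t₂) * a) / a) *
            (Real.cos ((t₁ - t₂) * b) * t₂ ^ 2) := by
  refine ⟨1, one_pos, 1 / 960, by norm_num, fun a b t ha ht hta htb ↦ ?_⟩
  calc 1 / 960 * t ^ 6
      = ∫ s in (0 : ℝ)..t, (t - s) / 2 * ((t * s ^ 3 / 3 - s ^ 4 / 4) / 4) := by
        rw [integral_sub_mul_integral_sub_mul_sq]; ring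
    _ ≤ ∫ s in (0 : ℝ)..t, (Real.sin ((t - s) * a) / a) * innerIntegral a b t s := by
        refine integral_mul_le_integral_mul ht.le (Continuous.intervalIntegrable (by fun_prop) _ _)
          (Continuous.intervalIntegrable
            ((by fun_prop : Continuous fun s ↦ Real.sin ((t - s) * a) / a).mul
              (continuous_innerIntegral a b t)) _ _)
          (fun s hs ↦ ⟨by linarith [hs.2], half_sub_le_sin_mul_div ha hta hs⟩)
          (fun s hs ↦ ⟨?_, le_innerIntegral ha hta htb hs⟩)
        have := mul_le_mul_of_nonneg_right hs.2 (pow_nonneg hs.1 3)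
        nlinarith [pow_nonneg hs.1 4]
end
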